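/- Let EF be an evolution frame with finite event class EC such that weak equivalence ≡⁰_EF has finite index d with respect to a successor-closed set S of knowledge states, and suppose k-equivalence implies strong equivalence on S. Then the number of equivalence classes of strong equivalence ≡_EF with respect to S is at most d^max(2·|EC|^k, k+1). -/

import Mathlib

structure KState (Rule Event : Type) : Type where
  kb : Set Rule
  events : List Event

/-- Append a sequence of events to a knowledge state. -/
def KState.append {Rule Event : Type} (s : KState Rule Event) (es : List Event) :
    KState Rule Event := ⟨s.kb, s.events ++ es⟩

/-- All events of the list belong to the event class `EC`. -/
def InEC {Event : Type} (EC : Set Event) (es : List Event) : Prop := ∀ E ∈ es, E ∈ EC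

/-- Strong equivalence of knowledge states with respect to belief operator `B`. -/
def StrongEquiv {Rule Event : Type} (B : KState Rule Event → Set Rule) (EC : Set Event)
    (s s' : KState Rule Event) : Prop :=
  ∀ es : List Event, InEC EC es → B (s.append es) = B (s'.append es)

/-- k-equivalence of knowledge states. -/
def KEquiv {Rule Event : Type} (B : KState Rule Event → Set Rule) (EC : Set Event) (k : ℕ)
    (s s' : KState Rule Event) : Prop :=
  ∀ es : List Event, InEC EC es → es.length ≤ k → B (s.append es) = B (s'.append es)

/-- The equivalence class of `s` within `S` under the relation `R`. -/
def cls {α : Type} (R : α → α → Prop) (S : Set α) (s : α) : Set α := {t ∈ S | R s t}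

/-- The relation `R` has finite index with respect to `S`:
    it partitions `S` into finitely many classes. -/
def FiniteIndex {α : Type} (R : α → α → Prop) (S : Set α) : Prop :=
  (cls R S '' S).Finite

/-- `S` is closed under taking successor knowledge states (one per event of `EC`). -/
def SuccClosed {Rule Event : Type} (EC : Set Event) (S : Set (KState Rule Event)) : Prop :=
  ∀ s ∈ S, ∀ E ∈ EC, s.append [E] ∈ S


/-!
Within `S`, a state is determined up to strong equivalence by its *weak profile*: the weak
class of each successor reached by a word of at most `k` events. Indeed, equal profiles give
equal beliefs after every such word, i.e. `k`-equivalence, hence strong equivalence. A profile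
is a map from the at most `∑_{i ≤ k} |EC|^i ≤ max (2 |EC|^k) (k + 1)` short words to the `d`
weak classes, which gives the bound.
-/

open Set Finset Function

section Counting

variable {α : Type} {β : Type*} {R : α → α → Prop} {S : Set α} {x y : α}

lemma cls_eq_cls (hR : Equivalence R) (h : R x y) : cls R S x = cls R S y := by
  ext t
  exact and_congr_right fun _ => ⟨hR.trans (hR.symm h), hR.trans h⟩

lemma rel_of_cls_eq_cls (hR : ∀ a, R a a) (hy : y ∈ S) (h : cls R S x = cls R S y) : R x y :=
  (h ▸ ⟨hy, hR y⟩ : y ∈ cls R S x).2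

lemma finite_cls_image_and_ncard_le (hR : Equivalence R) {f : α → β} {T : Set β}
    (hT : T.Finite) (hfT : MapsTo f S T) (hf : ∀ x ∈ S, ∀ y ∈ S, f x = f y → R x y) :
    (cls R S '' S).Finite ∧ (cls R S '' S).ncard ≤ T.ncard := by
  cases isEmpty_or_nonempty α
  · simp [Set.eq_empty_of_isEmpty S]
  have hfS : (f '' S).Finite := hT.subset hfT.image_subset
  have hfactor : cls R S '' S = (cls R S ∘ invFunOn f S) '' (f '' S) := by
    ext C
    constructor
    · rintro ⟨x, hx, rfl⟩
      have hex : ∃ a ∈ S, f a = f x := ⟨x, hx, rfl⟩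
      exact ⟨f x, mem_image_of_mem f hx,
        cls_eq_cls hR (hf _ (invFunOn_mem hex) x hx (invFunOn_eq hex))⟩
    · rintro ⟨_, ⟨x, hx, rfl⟩, rfl⟩
      exact ⟨_, invFunOn_mem ⟨x, hx, rfl⟩, rfl⟩
  rw [hfactor]
  exact ⟨hfS.image _,
    (ncard_image_le hfS).trans (ncard_le_ncard hfT.image_subset hT)⟩

lemma Set.ncard_univ_pi_const {ι : Type*} [Finite ι] (t : Set β) :
    (pi univ fun _ : ι => t).ncard = t.ncard ^ Nat.card ι := by
  rw [← Nat.card_coe_set_eq, Nat.card_congr (Equiv.Set.univPi _), Nat.card_fun,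
    Nat.card_coe_set_eq]

lemma sum_range_pow_le_max (n k : ℕ) :
    ∑ i ∈ range (k + 1), n ^ i ≤ max (2 * n ^ k) (k + 1) := by
  rcases le_or_gt n 1 with hn | hn
  · refine le_max_of_le_right ?_
    calc ∑ i ∈ range (k + 1), n ^ i ≤ ∑ _i ∈ range (k + 1), 1 :=
          sum_le_sum fun i _ => pow_le_one₀ (Nat.zero_le n) hn
      _ = k + 1 := by simp
  · refine le_max_of_le_left ?_
    have hgeom : ∑ i ∈ range k, n ^ i < n ^ k := Nat.geomSum_lt hn fun i hi => mem_range.mp hi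
    rw [sum_range_succ]
    omega

lemma pow_sum_range_pow_le (d n k : ℕ) :
    d ^ ∑ i ∈ range (k + 1), n ^ i ≤ d ^ max (2 * n ^ k) (k + 1) := by
  rcases d.eq_zero_or_pos with rfl | hd
  · rw [zero_pow (by simp [sum_range_succ'])]
    exact Nat.zero_le _
  · exact Nat.pow_le_pow_right hd (sum_range_pow_le_max n k)

end Counting

variable {Rule Event : Type} {B : KState Rule Event → Set Rule} {EC : Set Event}
  {S : Set (KState Rule Event)} {k : ℕ} {s s' : KState Rule Event}

@[simp] lemma KState.append_nil (s : KState Rule Event) : s.append [] = s := by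
  simp [KState.append]

lemma KState.append_cons (s : KState Rule Event) (E : Event) (l : List Event) :
    s.append (E :: l) = (s.append [E]).append l := by
  simp [KState.append]

lemma SuccClosed.append_mem (hS : SuccClosed EC S) {l : List Event} (hl : InEC EC l)
    (hs : s ∈ S) : s.append l ∈ S := by
  induction l generalizing s with
  | nil => simpa using hs
  | cons E l ih =>
    rw [KState.append_cons]
    exact ih (fun E' hE' => hl E' (List.mem_cons_of_mem E hE'))
      (hS s hs E (hl E List.mem_cons_self))

lemma StrongEquiv.equivalence (B : KState Rule Event → Set Rule) (EC : Set Event) :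
    Equivalence (StrongEquiv B EC) where
  refl _ _ _ := rfl
  symm h l hl := (h l hl).symm
  trans h h' l hl := (h l hl).trans (h' l hl)

lemma KEquiv.refl (s : KState Rule Event) : KEquiv B EC k s s := fun _ _ _ => rfl

lemma KEquiv.belief_eq (h : KEquiv B EC k s s') : B s = B s' := by
  simpa using h [] (fun _ h => absurd h List.not_mem_nil) (Nat.zero_le k)

abbrev ShortWord (EC : Set Event) (k : ℕ) : Type := Σ i : Fin (k + 1), Fin i → EC

namespace ShortWord

def toList (w : ShortWord EC k) : List Event := List.ofFn fun j => (w.2 j : Event)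

lemma inEC_toList (w : ShortWord EC k) : InEC EC w.toList := by
  intro E hE
  obtain ⟨j, rfl⟩ := List.mem_ofFn.mp hE
  exact (w.2 j).2

lemma exists_toList_eq {l : List Event} (hl : InEC EC l) (hlen : l.length ≤ k) :
    ∃ w : ShortWord EC k, w.toList = l :=
  ⟨⟨⟨l.length, Nat.lt_succ_of_le hlen⟩, fun j => ⟨l.get j, hl _ (l.get_mem j)⟩⟩,
    List.ofFn_get l⟩

lemma card [Finite EC] : Nat.card (ShortWord EC k) = ∑ i ∈ range (k + 1), EC.ncard ^ i := by
  rw [Nat.card_sigma, Fin.sum_univ_eq_sum_range (fun i => Nat.card (Fin i → EC))]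
  simp only [Nat.card_fun, Nat.card_coe_set_eq, Nat.card_eq_fintype_card, Fintype.card_fin]

end ShortWord

variable (B EC S k) in
def weakProfile (s : KState Rule Event) (w : ShortWord EC k) : Set (KState Rule Event) :=
  cls (KEquiv B EC 0) S (s.append w.toList)

lemma weakProfile_mem_pi (hS : SuccClosed EC S) (hs : s ∈ S) :
    weakProfile B EC S k s ∈ pi univ fun _ => cls (KEquiv B EC 0) S '' S :=
  fun w _ => mem_image_of_mem _ (hS.append_mem w.inEC_toList hs)

lemma KEquiv.of_weakProfile_eq (hS : SuccClosed EC S) (hs' : s' ∈ S)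
    (h : weakProfile B EC S k s = weakProfile B EC S k s') : KEquiv B EC k s s' := by
  intro l hl hlen
  obtain ⟨w, rfl⟩ := ShortWord.exists_toList_eq hl hlen
  exact (rel_of_cls_eq_cls KEquiv.refl (hS.append_mem w.inEC_toList hs')
    (congrFun h w)).belief_eq

/-- If the event class `EC` is finite, `S` is successor closed, weak
    equivalence has finite index `d` with respect to `S`, and `k`-equivalence implies
    strong equivalence on `S`, then strong equivalence has at most
    `d ^ max (2 * |EC| ^ k) (k + 1)` classes with respect to `S`. -/
theorem strongEquiv_index_bound {Rule Event : Type}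
    (B : KState Rule Event → Set Rule) (EC : Set Event)
    (S : Set (KState Rule Event)) (k d : ℕ)
    (hEC : EC.Finite) (hS : SuccClosed EC S)
    (hw : (cls (KEquiv B EC 0) S '' S).Finite)
    (hd : (cls (KEquiv B EC 0) S '' S).ncard = d)
    (hk : ∀ s ∈ S, ∀ s' ∈ S, KEquiv B EC k s s' → StrongEquiv B EC s s') :
    (cls (StrongEquiv B EC) S '' S).Finite ∧
      (cls (StrongEquiv B EC) S '' S).ncard ≤ d ^ max (2 * EC.ncard ^ k) (k + 1) := by
  have := hEC.to_subtype
  obtain ⟨hfin, hle⟩ := finite_cls_image_and_ncard_le (StrongEquiv.equivalence B EC)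
    (Set.Finite.pi fun _ : ShortWord EC k => hw) (fun s hs => weakProfile_mem_pi hS hs)
    fun s hs s' hs' h => hk s hs s' hs' (KEquiv.of_weakProfile_eq hS hs' h)
  refine ⟨hfin, hle.trans ?_⟩
  rw [Set.ncard_univ_pi_const, hd, ShortWord.card]
  exact pow_sum_range_pow_le d _ k
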